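/- Let q, r : ℝ × ℝ → ℂ be smooth functions of (x,t). For λ ∈ ℂ define the 4×4 block matrices F(λ) = [[−iλE, qE + rΓ],[−conj(q)E − conj(r)Γ, iλE]] and G(λ) = [[(−2iλ² + i q conj(q))E + i(conj(q) r + q conj(r))Γ, (2qλ + i ∂x q)E + (2rλ + i ∂x r)Γ],[(−2 conj(q) λ + i ∂x conj(q))E + (−2 conj(r) λ + i ∂x conj(r))Γ, (2iλ² − i q conj(q))E − i(conj(q) r + q conj(r))Γ]], where E is the 2×2 identity matrix and Γ = [[0,0],[1,0]]. Then the zero-curvature equation ∂t F(λ) − ∂x G(λ) + F(λ)G(λ) − G(λ)F(λ) = 0 holds for all λ ∈ ℂ and all (x,t) if and only if (q,r) satisfies the Frobenius NLS system. -/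

import Mathlib

open Complex

/-- Partial derivative in `x` of a function of `(x,t)`. -/
noncomputable def pX (f : ℝ → ℝ → ℂ) : ℝ → ℝ → ℂ := fun x t => deriv (fun x' => f x' t) x

/-- Entrywise partial derivative in `x` of a matrix-valued function of `(x,t)`. -/
noncomputable def mDX {m : Type*} (M : ℝ → ℝ → Matrix m m ℂ) : ℝ → ℝ → Matrix m m ℂ :=
  fun x t => Matrix.of fun i j => deriv (fun x' => M x' t i j) x

/-- Entrywise partial derivative in `t` of a matrix-valued function of `(x,t)`. -/
noncomputable def mDT {m : Type*} (M : ℝ → ℝ → Matrix m m ℂ) : ℝ → ℝ → Matrix m m ℂ :=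
  fun x t => Matrix.of fun i j => deriv (fun t' => M x t' i j) t

/-- The 2×2 identity matrix `E`. -/
def matE : Matrix (Fin 2) (Fin 2) ℂ := 1

/-- The nilpotent matrix `Γ = [[0,0],[1,0]]`. -/
def matΓ : Matrix (Fin 2) (Fin 2) ℂ := !![0, 0; 1, 0]

/-!
Work in the commutative algebra `ℂ[Γ]` (with `Γ² = 0`) spanned by `E` and `Γ`, and put
`Q = q E + r Γ`. Then `(F, G)` is the scalar AKNS pair of NLS with `q` replaced by `Q`, and the
Frobenius system is the single equation `i Q_t + Q_xx + 2 Q² Q̄ = 0`. Expanding the zero-curvature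
expression block by block, every power of `λ` and both diagonal blocks cancel identically, while the
off-diagonal blocks are `-i` times this residual and its conjugate; so the expression vanishes for
all `λ` exactly when the residual does.
-/

open ComplexConjugate Matrix

noncomputable def EΓ (a b : ℂ) : Matrix (Fin 2) (Fin 2) ℂ := a • matE + b • matΓ

lemma EΓ_apply (a b : ℂ) (i j : Fin 2) : EΓ a b i j = a * matE i j + b * matΓ i j := rfl

lemma EΓ_add (a b c d : ℂ) : EΓ a b + EΓ c d = EΓ (a + c) (b + d) := by
  simp only [EΓ, add_smul]; abel

lemma EΓ_neg (a b : ℂ) : -EΓ a b = EΓ (-a) (-b) := by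
  simp only [EΓ, neg_smul, neg_add]

lemma EΓ_mul (a b c d : ℂ) : EΓ a b * EΓ c d = EΓ (a * c) (a * d + b * c) := by
  ext i j
  fin_cases i <;> fin_cases j <;>
    simp [EΓ, matE, matΓ, Matrix.mul_apply, Fin.sum_univ_two, add_comm]

lemma EΓ_smul (c a b : ℂ) : c • EΓ a b = EΓ (c * a) (c * b) := by
  simp only [EΓ, smul_add, smul_smul]

lemma EΓ_zero : EΓ 0 0 = 0 := by
  simp only [EΓ, zero_smul, add_zero]

lemma EΓ_eq_zero_iff {a b : ℂ} : EΓ a b = 0 ↔ a = 0 ∧ b = 0 := by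
  refine ⟨fun h => ⟨?_, ?_⟩, fun ⟨ha, hb⟩ => by simp [EΓ, ha, hb]⟩
  · simpa [EΓ, matE, matΓ] using congrFun (congrFun h 0) 0
  · simpa [EΓ, matE, matΓ] using congrFun (congrFun h 1) 0

lemma fromBlocks_EΓ_conj_eq_zero_iff {a b : ℂ} :
    fromBlocks 0 (EΓ a b) (EΓ (conj a) (conj b)) 0 = 0 ↔ a = 0 ∧ b = 0 := by
  rw [← fromBlocks_zero, fromBlocks_inj]
  simp only [EΓ_eq_zero_iff, map_eq_zero, true_and, and_true, and_self]

section PartialDerivatives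

variable {n : Type*}

lemma mDT_fromBlocks (A B C D : ℝ → ℝ → Matrix n n ℂ) (x t : ℝ) :
    mDT (fun x t => fromBlocks (A x t) (B x t) (C x t) (D x t)) x t =
      fromBlocks (mDT A x t) (mDT B x t) (mDT C x t) (mDT D x t) := by
  ext (i | i) (j | j) <;> rfl

lemma mDX_fromBlocks (A B C D : ℝ → ℝ → Matrix n n ℂ) (x t : ℝ) :
    mDX (fun x t => fromBlocks (A x t) (B x t) (C x t) (D x t)) x t =
      fromBlocks (mDX A x t) (mDX B x t) (mDX C x t) (mDX D x t) := by
  ext (i | i) (j | j) <;> rfl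

variable {f g : ℝ → ℝ → ℂ} {x t : ℝ} {f' g' : ℂ}

lemma mDT_EΓ (hf : HasDerivAt (fun t' => f x t') f' t) (hg : HasDerivAt (fun t' => g x t') g' t) :
    mDT (fun x t => EΓ (f x t) (g x t)) x t = EΓ f' g' := by
  ext i j
  simp only [mDT, of_apply, EΓ_apply]
  exact ((hf.mul_const _).add (hg.mul_const _)).deriv

lemma mDX_EΓ (hf : HasDerivAt (fun x' => f x' t) f' x) (hg : HasDerivAt (fun x' => g x' t) g' x) :
    mDX (fun x t => EΓ (f x t) (g x t)) x t = EΓ f' g' := by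
  ext i j
  simp only [mDX, of_apply, EΓ_apply]
  exact ((hf.mul_const _).add (hg.mul_const _)).deriv

lemma HasDerivAt.conj {f : ℝ → ℂ} {f' : ℂ} {x : ℝ} (h : HasDerivAt f f' x) :
    HasDerivAt (fun y => conj (f y)) (conj f') x :=
  h.star

lemma pX_conj (f : ℝ → ℝ → ℂ) (x t : ℝ) :
    pX (fun x t => conj (f x t)) x t = conj (pX f x t) :=
  deriv.star

end PartialDerivatives

section Regularity

variable {f : ℝ → ℝ → ℂ}

lemma differentiable_x_of_contDiff (hf : ContDiff ℝ 1 (fun p : ℝ × ℝ => f p.1 p.2)) (t : ℝ) :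
    Differentiable ℝ (fun x => f x t) :=
  (hf.comp (contDiff_id.prodMk contDiff_const)).differentiable one_ne_zero

lemma differentiable_t_of_contDiff (hf : ContDiff ℝ 1 (fun p : ℝ × ℝ => f p.1 p.2)) (x : ℝ) :
    Differentiable ℝ (fun t => f x t) :=
  (hf.comp (contDiff_const.prodMk contDiff_id)).differentiable one_ne_zero

lemma differentiable_pX_of_contDiff (hf : ContDiff ℝ 2 (fun p : ℝ × ℝ => f p.1 p.2)) (t : ℝ) :
    Differentiable ℝ (fun x => pX f x t) :=
  (contDiff_succ_iff_deriv (n := 1).mp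
    (hf.comp (contDiff_id.prodMk contDiff_const))).2.2.differentiable one_ne_zero

end Regularity

section LaxPair

variable (q r : ℝ → ℝ → ℂ)

noncomputable def laxF (l : ℂ) (x t : ℝ) : Matrix (Fin 2 ⊕ Fin 2) (Fin 2 ⊕ Fin 2) ℂ :=
  fromBlocks (EΓ (-I * l) 0) (EΓ (q x t) (r x t))
    (EΓ (-conj (q x t)) (-conj (r x t))) (EΓ (I * l) 0)

noncomputable def laxG (l : ℂ) (x t : ℝ) : Matrix (Fin 2 ⊕ Fin 2) (Fin 2 ⊕ Fin 2) ℂ :=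
  fromBlocks
    (EΓ (-2 * I * l ^ 2 + I * q x t * conj (q x t))
      (I * (conj (q x t) * r x t + q x t * conj (r x t))))
    (EΓ (2 * q x t * l + I * pX q x t) (2 * r x t * l + I * pX r x t))
    (EΓ (-2 * conj (q x t) * l + I * conj (pX q x t))
      (-2 * conj (r x t) * l + I * conj (pX r x t)))
    (EΓ (2 * I * l ^ 2 - I * q x t * conj (q x t))
      (-(I * (conj (q x t) * r x t + q x t * conj (r x t)))))

noncomputable def nlsQ (x t : ℝ) : ℂ :=
  I * deriv (fun t' => q x t') t + pX (pX q) x t + 2 * q x t ^ 2 * conj (q x t)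

noncomputable def nlsR (x t : ℝ) : ℂ :=
  I * deriv (fun t' => r x t') t + pX (pX r) x t + 2 * q x t ^ 2 * conj (r x t)
    + 4 * q x t * conj (q x t) * r x t

variable {q r} {x t : ℝ} (l : ℂ)

lemma mDT_laxF (hq : DifferentiableAt ℝ (fun t' => q x t') t)
    (hr : DifferentiableAt ℝ (fun t' => r x t') t) :
    mDT (laxF q r l) x t = fromBlocks (EΓ 0 0)
      (EΓ (deriv (fun t' => q x t') t) (deriv (fun t' => r x t') t))
      (EΓ (-conj (deriv (fun t' => q x t') t)) (-conj (deriv (fun t' => r x t') t)))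
      (EΓ 0 0) := by
  have hconst (c : ℂ) : HasDerivAt (fun _ : ℝ => c) 0 t := hasDerivAt_const t c
  have hq' : HasDerivAt (fun t' => -conj (q x t')) (-conj (deriv (fun t' => q x t') t)) t :=
    hq.hasDerivAt.conj.neg
  have hr' : HasDerivAt (fun t' => -conj (r x t')) (-conj (deriv (fun t' => r x t') t)) t :=
    hr.hasDerivAt.conj.neg
  unfold laxF
  rw [mDT_fromBlocks]
  congr 1
  · exact mDT_EΓ (hconst _) (hconst _)
  · exact mDT_EΓ hq.hasDerivAt hr.hasDerivAt
  · exact mDT_EΓ hq' hr'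
  · exact mDT_EΓ (hconst _) (hconst _)

lemma mDX_laxG (hq : DifferentiableAt ℝ (fun x' => q x' t) x)
    (hr : DifferentiableAt ℝ (fun x' => r x' t) x)
    (hqx : DifferentiableAt ℝ (fun x' => pX q x' t) x)
    (hrx : DifferentiableAt ℝ (fun x' => pX r x' t) x) :
    mDX (laxG q r l) x t = fromBlocks
      (EΓ (I * pX q x t * conj (q x t) + I * q x t * conj (pX q x t))
        (I * (conj (pX q x t) * r x t + conj (q x t) * pX r x t + pX q x t * conj (r x t)
          + q x t * conj (pX r x t))))
      (EΓ (2 * pX q x t * l + I * pX (pX q) x t) (2 * pX r x t * l + I * pX (pX r) x t))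
      (EΓ (-2 * conj (pX q x t) * l + I * conj (pX (pX q) x t))
        (-2 * conj (pX r x t) * l + I * conj (pX (pX r) x t)))
      (EΓ (-(I * pX q x t * conj (q x t) + I * q x t * conj (pX q x t)))
        (-(I * (conj (pX q x t) * r x t + conj (q x t) * pX r x t + pX q x t * conj (r x t)
          + q x t * conj (pX r x t))))) := by
  have Hq : HasDerivAt (fun x' => q x' t) (pX q x t) x := hq.hasDerivAt
  have Hr : HasDerivAt (fun x' => r x' t) (pX r x t) x := hr.hasDerivAt
  have Hqx : HasDerivAt (fun x' => pX q x' t) (pX (pX q) x t) x := hqx.hasDerivAt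
  have Hrx : HasDerivAt (fun x' => pX r x' t) (pX (pX r) x t) x := hrx.hasDerivAt
  have Hqq : HasDerivAt (fun x' => I * q x' t * conj (q x' t))
      (I * pX q x t * conj (q x t) + I * q x t * conj (pX q x t)) x :=
    ((Hq.const_mul I).mul Hq.conj).congr_deriv (by ring)
  have Hqr : HasDerivAt (fun x' => conj (q x' t) * r x' t + q x' t * conj (r x' t))
      (conj (pX q x t) * r x t + conj (q x t) * pX r x t + pX q x t * conj (r x t)
        + q x t * conj (pX r x t)) x := by
    exact ((Hq.conj.mul Hr).add (Hq.mul Hr.conj)).congr_deriv (by ring)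
  unfold laxG
  rw [mDX_fromBlocks]
  congr 1
  · refine mDX_EΓ ?_ ?_
    · exact ((hasDerivAt_const x _).add Hqq).congr_deriv (zero_add _)
    · exact Hqr.const_mul I
  · refine mDX_EΓ ?_ ?_
    · exact ((Hq.const_mul 2).mul_const l).add (Hqx.const_mul I)
    · exact ((Hr.const_mul 2).mul_const l).add (Hrx.const_mul I)
  · refine mDX_EΓ ?_ ?_
    · exact ((Hq.conj.const_mul (-2)).mul_const l).add (Hqx.conj.const_mul I)
    · exact ((Hr.conj.const_mul (-2)).mul_const l).add (Hrx.conj.const_mul I)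
  · refine mDX_EΓ ?_ ?_
    · exact ((hasDerivAt_const x _).sub Hqq).congr_deriv (zero_sub _)
    · exact (Hqr.const_mul I).neg

lemma zeroCurvature_laxF_laxG (hqt : DifferentiableAt ℝ (fun t' => q x t') t)
    (hrt : DifferentiableAt ℝ (fun t' => r x t') t)
    (hq : DifferentiableAt ℝ (fun x' => q x' t) x)
    (hr : DifferentiableAt ℝ (fun x' => r x' t) x)
    (hqx : DifferentiableAt ℝ (fun x' => pX q x' t) x)
    (hrx : DifferentiableAt ℝ (fun x' => pX r x' t) x) :
    mDT (laxF q r l) x t - mDX (laxG q r l) x t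
        + (laxF q r l x t * laxG q r l x t - laxG q r l x t * laxF q r l x t) =
      (-I) • fromBlocks 0 (EΓ (nlsQ q x t) (nlsR q r x t))
        (EΓ (conj (nlsQ q x t)) (conj (nlsR q r x t))) 0 := by
  rw [mDT_laxF l hqt hrt, mDX_laxG l hq hr hqx hrx, ← EΓ_zero]
  simp only [laxF, laxG, nlsQ, nlsR, fromBlocks_multiply, fromBlocks_smul, fromBlocks_neg,
    fromBlocks_add, sub_eq_add_neg, EΓ_mul, EΓ_add, EΓ_neg, EΓ_smul, map_add, map_mul, map_pow,
    map_ofNat, conj_I, conj_conj]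
  congr 2 <;> ring_nf <;> simp only [I_sq] <;> ring

end LaxPair

theorem statement3 (q r : ℝ → ℝ → ℂ)
    (hq : ContDiff ℝ (⊤ : ℕ∞) (fun p : ℝ × ℝ => q p.1 p.2))
    (hr : ContDiff ℝ (⊤ : ℕ∞) (fun p : ℝ × ℝ => r p.1 p.2))
    (F G : ℂ → ℝ → ℝ → Matrix (Fin 2 ⊕ Fin 2) (Fin 2 ⊕ Fin 2) ℂ)
    (hF : ∀ (l : ℂ) (x t : ℝ), F l x t = Matrix.fromBlocks
      ((-I * l) • matE)
      (q x t • matE + r x t • matΓ)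
      ((-(starRingEnd ℂ) (q x t)) • matE + (-(starRingEnd ℂ) (r x t)) • matΓ)
      ((I * l) • matE))
    (hG : ∀ (l : ℂ) (x t : ℝ), G l x t = Matrix.fromBlocks
      ((-2 * I * l ^ 2 + I * q x t * (starRingEnd ℂ) (q x t)) • matE
        + (I * ((starRingEnd ℂ) (q x t) * r x t + q x t * (starRingEnd ℂ) (r x t))) • matΓ)
      ((2 * q x t * l + I * pX q x t) • matE + (2 * r x t * l + I * pX r x t) • matΓ)
      ((-2 * (starRingEnd ℂ) (q x t) * l
          + I * pX (fun x' t' => (starRingEnd ℂ) (q x' t')) x t) • matE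
        + (-2 * (starRingEnd ℂ) (r x t) * l
          + I * pX (fun x' t' => (starRingEnd ℂ) (r x' t')) x t) • matΓ)
      ((2 * I * l ^ 2 - I * q x t * (starRingEnd ℂ) (q x t)) • matE
        + (-(I * ((starRingEnd ℂ) (q x t) * r x t + q x t * (starRingEnd ℂ) (r x t)))) • matΓ)) :
    (∀ (l : ℂ) (x t : ℝ),
        mDT (F l) x t - mDX (G l) x t + (F l x t * G l x t - G l x t * F l x t) = 0)
    ↔ (∀ x t : ℝ,
        (I * deriv (fun t' => q x t') t + pX (pX q) x t
          + 2 * (q x t) ^ 2 * (starRingEnd ℂ) (q x t) = 0)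
        ∧ (I * deriv (fun t' => r x t') t + pX (pX r) x t
          + 2 * (q x t) ^ 2 * (starRingEnd ℂ) (r x t)
          + 4 * q x t * (starRingEnd ℂ) (q x t) * r x t = 0)) := by
  have hq2 : ContDiff ℝ 2 (fun p : ℝ × ℝ => q p.1 p.2) := hq.of_le (WithTop.coe_le_coe.mpr le_top)
  have hr2 : ContDiff ℝ 2 (fun p : ℝ × ℝ => r p.1 p.2) := hr.of_le (WithTop.coe_le_coe.mpr le_top)
  have hq1 := hq2.of_le one_le_two
  have hr1 := hr2.of_le one_le_two
  obtain rfl : F = laxF q r := by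
    funext l x t
    rw [hF]
    simp only [laxF, EΓ, zero_smul, add_zero]
  obtain rfl : G = laxG q r := by
    funext l x t
    rw [hG, pX_conj, pX_conj]
    rfl
  have hcurv (l : ℂ) (x t : ℝ) := zeroCurvature_laxF_laxG l
    (differentiable_t_of_contDiff hq1 x t) (differentiable_t_of_contDiff hr1 x t)
    (differentiable_x_of_contDiff hq1 t x) (differentiable_x_of_contDiff hr1 t x)
    (differentiable_pX_of_contDiff hq2 t x) (differentiable_pX_of_contDiff hr2 t x)
  simp only [hcurv, smul_eq_zero, neg_eq_zero, I_ne_zero, false_or,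
    fromBlocks_EΓ_conj_eq_zero_iff, forall_const]
  rfl
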